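/- arXiv:1402.1392 — 3 statements merged into one kernel-verified Lean document; each statement's English description precedes it below -/
import Mathlib

section
/- Assume the set of positive imaginary roots Δ^im_+ is non-empty. Then the imaginary cone I is a convex cone (it is convex and closed under multiplication by non-negative reals) and is contained in the cone Σ_{i=1}^n ℝ_{≥0}·α_i ⊂ L ⊗ ℝ. -/
open scoped BigOperators

noncomputable section

namespace KacMoodyStab

variable {ι : Type*} [Fintype ι] [DecidableEq ι]

/-- A symmetric generalized Cartan matrix: symmetric, `2` on the diagonal,
non-positive integers off the diagonal. -/
def IsGCM (A : Matrix ι ι ℤ) : Prop :=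
  A.IsSymm ∧ (∀ i, A i i = 2) ∧ ∀ i j, i ≠ j → A i j ≤ 0

/-- The simple root `α i` in the root lattice `L = ι → ℤ`. -/
def sroot (i : ι) : ι → ℤ := Pi.single i 1

/-- The symmetric bilinear form `(x, y) = ∑ i j, x i * A i j * y j` on the root lattice. -/
def bform (A : Matrix ι ι ℤ) (x y : ι → ℤ) : ℤ := ∑ i, ∑ j, x i * A i j * y j

/-- The linear functional `λ ↦ (λ, α i)`. -/
def corootFn (A : Matrix ι ι ℤ) (i : ι) : (ι → ℤ) →ₗ[ℤ] ℤ where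
  toFun x := ∑ j, x j * A j i
  map_add' x y := by simp [add_mul, Finset.sum_add_distrib]
  map_smul' c x := by simp [Finset.mul_sum, mul_assoc]

lemma corootFn_sroot (A : Matrix ι ι ℤ) (hA : IsGCM A) (i : ι) :
    corootFn A i (sroot i) = 2 := by
  have h : ∀ j, (sroot i) j * A j i = if j = i then A j i else 0 := by
    intro j
    by_cases h : j = i <;> simp [sroot, Pi.single_apply, h]
  have : corootFn A i (sroot i) = ∑ j, (sroot i) j * A j i := rfl
  rw [this]
  simp [h, hA.2.1 i]

/-- The simple reflection `r i : λ ↦ λ - (λ, α i) α i` as a `ℤ`-linear automorphism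
of the root lattice. -/
def srefl (A : Matrix ι ι ℤ) (hA : IsGCM A) (i : ι) : (ι → ℤ) ≃ₗ[ℤ] (ι → ℤ) :=
  Module.reflection (corootFn_sroot A hA i)

/-- The Weyl group, the subgroup of automorphisms of the root lattice generated by the
simple reflections. -/
def weylGroup (A : Matrix ι ι ℤ) (hA : IsGCM A) : Subgroup ((ι → ℤ) ≃ₗ[ℤ] (ι → ℤ)) :=
  Subgroup.closure (Set.range (srefl A hA))

/-- The set of real roots: the orbit of the simple roots under the Weyl group. -/
def realRoots (A : Matrix ι ι ℤ) (hA : IsGCM A) : Set (ι → ℤ) :=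
  {α | ∃ w ∈ weylGroup A hA, ∃ i, α = w (sroot i)}

/-- The set of positive real roots. -/
def posRealRoots (A : Matrix ι ι ℤ) (hA : IsGCM A) : Set (ι → ℤ) :=
  realRoots A hA ∩ {α | ∀ i, 0 ≤ α i}

/-- The Dynkin diagram of a (symmetric) GCM: distinct `i`, `j` are adjacent
iff `A i j < 0`. -/
def dynkin (A : Matrix ι ι ℤ) : SimpleGraph ι where
  Adj i j := i ≠ j ∧ (A i j < 0 ∨ A j i < 0)
  symm := ⟨fun i j h => ⟨h.1.symm, h.2.symm⟩⟩
  loopless := ⟨fun i h => h.1 rfl⟩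

/-- The fundamental set `K` of positive imaginary roots: non-zero, non-negative,
connected support, and `(α, α i) ≤ 0` for all `i`. -/
def fundamentalSet (A : Matrix ι ι ℤ) : Set (ι → ℤ) :=
  {α | (∀ i, 0 ≤ α i) ∧ α ≠ 0 ∧
    ((dynkin A).induce {i | α i ≠ 0}).Connected ∧
    ∀ i, bform A α (sroot i) ≤ 0}

/-- The set of positive imaginary roots: the orbit of the fundamental set under the
Weyl group. -/
def posImRoots (A : Matrix ι ι ℤ) (hA : IsGCM A) : Set (ι → ℤ) :=
  {β | ∃ w ∈ weylGroup A hA, ∃ α ∈ fundamentalSet A, β = w α}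

/-- The set of all roots `Δ = Δ^re ∪ Δ^im`. -/
def allRoots (A : Matrix ι ι ℤ) (hA : IsGCM A) : Set (ι → ℤ) :=
  realRoots A hA ∪ (posImRoots A hA ∪ {α | -α ∈ posImRoots A hA})

/-- The canonical embedding of the root lattice into `V*_ℝ = L ⊗ ℝ = ι → ℝ`. -/
def castR (α : ι → ℤ) : ι → ℝ := fun i => (α i : ℝ)

/-- The imaginary cone: the closure of the convex hull of `Δ^im_+ ∪ {0}` in `V*_ℝ`. -/
def imCone (A : Matrix ι ι ℤ) (hA : IsGCM A) : Set (ι → ℝ) :=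
  closure (convexHull ℝ (insert 0 (castR '' posImRoots A hA)))

/-- The pairing of `Z ∈ V = Hom_ℤ(L, ℂ)` (recorded by its values `Z i = Z(α i)`)
with an element of `V*_ℝ`, via the `ℝ`-linear extension of `Z`. -/
def pairC (Z : ι → ℂ) (l : ι → ℝ) : ℂ := ∑ i, Z i * (l i : ℂ)

/-- The pairing of `Z ∈ V = Hom_ℤ(L, ℂ)` with an element of the root lattice. -/
def pairCZ (Z : ι → ℂ) (α : ι → ℤ) : ℂ := ∑ i, Z i * (α i : ℂ)

/-- The pairing of `Z ∈ V_ℝ = Hom_ℤ(L, ℝ)` with an element of `V*_ℝ`. -/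
def pairR (Z : ι → ℝ) (l : ι → ℝ) : ℝ := ∑ i, Z i * l i

/-- The set `X = V \ ∪_{λ ∈ I₀} H_λ`. -/
def Xset (A : Matrix ι ι ℤ) (hA : IsGCM A) : Set (ι → ℂ) :=
  {Z | ∀ l ∈ imCone A hA \ {0}, pairC Z l ≠ 0}

/-- The regular subset `Xreg = X \ ∪_{α ∈ Δ^re_+} H_α`. -/
def Xreg (A : Matrix ι ι ℤ) (hA : IsGCM A) : Set (ι → ℂ) :=
  Xset A hA ∩ {Z | ∀ α ∈ posRealRoots A hA, pairCZ Z α ≠ 0}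

/-- The sector `{r e^{iπφ} : r > 0, φ₁ ≤ φ ≤ φ₂}` in `ℂ`. -/
def sector (φ₁ φ₂ : ℝ) : Set ℂ :=
  {z | ∃ r : ℝ, 0 < r ∧ ∃ φ : ℝ, φ₁ ≤ φ ∧ φ ≤ φ₂ ∧
    z = (r : ℂ) * Complex.exp (Real.pi * φ * Complex.I)}

/-- The contragredient action of a lattice automorphism `w` on `V = Hom_ℤ(L, ℂ)`:
`(w·Z)(α i) = Z(w⁻¹ α i)`. -/
def actC (w : (ι → ℤ) ≃ₗ[ℤ] (ι → ℤ)) (Z : ι → ℂ) : ι → ℂ :=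
  fun i => ∑ j, Z j * ((w.symm (sroot i)) j : ℂ)

/-- The contragredient action of a lattice automorphism `w` on `V_ℝ = Hom_ℤ(L, ℝ)`:
`(w·Z)(α i) = Z(w⁻¹ α i)`. -/
def actR (w : (ι → ℤ) ≃ₗ[ℤ] (ι → ℤ)) (Z : ι → ℝ) : ι → ℝ :=
  fun i => ∑ j, Z j * ((w.symm (sroot i)) j : ℝ)

/-- The `ℝ`-linear extension of a lattice automorphism `w` to `V*_ℝ = L ⊗ ℝ`. -/
def extR (w : (ι → ℤ) ≃ₗ[ℤ] (ι → ℤ)) (l : ι → ℝ) : ι → ℝ :=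
  fun i => ∑ j, ((w (sroot j)) i : ℝ) * l j

/-- Finite type for a GCM (Kac's condition (Fin)). -/
def IsFiniteType (A : Matrix ι ι ℤ) : Prop :=
  A.det ≠ 0 ∧
  (∃ u : ι → ℝ, (∀ i, 0 < u i) ∧ ∀ i, 0 < (A.map (Int.cast : ℤ → ℝ)).mulVec u i) ∧
  ∀ u : ι → ℝ, (∀ i, 0 ≤ (A.map (Int.cast : ℤ → ℝ)).mulVec u i) →
    (∀ i, 0 < u i) ∨ u = 0

/-- The (open) Weyl chamber `C_ℝ` in `V_ℝ`. -/
def weylChamber : Set (ι → ℝ) := {Z | ∀ i, 0 < Z i}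

/-- The closed Weyl chamber in `V_ℝ`. -/
def weylChamberCl : Set (ι → ℝ) := {Z | ∀ i, 0 ≤ Z i}

/-- The Tits cone `T_ℝ = ∪_{w ∈ W} w(C̄_ℝ)`. -/
def titsCone (A : Matrix ι ι ℤ) (hA : IsGCM A) : Set (ι → ℝ) :=
  ⋃ w ∈ weylGroup A hA, actR w '' (weylChamberCl (ι := ι))

/-- The regular part of the Tits cone `T_{ℝ,reg} = ∪_{w ∈ W} w(C_ℝ)`. -/
def titsConeReg (A : Matrix ι ι ℤ) (hA : IsGCM A) : Set (ι → ℝ) :=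
  ⋃ w ∈ weylGroup A hA, actR w '' (weylChamber (ι := ι))

/-- The normalized regular subset `Xreg^N = {Z ∈ Xreg : φ^I(Z) = 1/2}`:
the image `Z(I₀)` is a sector `{r e^{iπφ} : r > 0, φ₁ ≤ φ ≤ φ₂}` with
`φ₂ - φ₁ < 1` and midpoint `(φ₁ + φ₂)/2 = 1/2`. -/
def XregN (A : Matrix ι ι ℤ) (hA : IsGCM A) : Set (ι → ℂ) :=
  {Z | Z ∈ Xreg A hA ∧ ∃ φ₁ φ₂ : ℝ, φ₁ ≤ φ₂ ∧ φ₂ - φ₁ < 1 ∧ φ₁ + φ₂ = 1 ∧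
    pairC Z '' (imCone A hA \ {0}) = sector φ₁ φ₂}

/-- The semi-closed upper half-plane `H = ℍ ∪ ℝ_{<0}`. -/
def semiClosedH : Set ℂ := {z | 0 < z.im} ∪ {z | z.im = 0 ∧ z.re < 0}

/-- The normalized complexified Weyl chamber
`C^N = {Z ∈ Xreg^N : Z(α i) ∈ H for all i}`. -/
def CN (A : Matrix ι ι ℤ) (hA : IsGCM A) : Set (ι → ℂ) :=
  {Z | Z ∈ XregN A hA ∧ ∀ i, Z i ∈ semiClosedH}

/-- The regular subset of the complexified Tits cone:
`T_reg = {Z ∈ Xreg : Z(I₀) ⊆ ℍ}`. -/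
def Treg (A : Matrix ι ι ℤ) (hA : IsGCM A) : Set (ι → ℂ) :=
  {Z | Z ∈ Xreg A hA ∧ ∀ l ∈ imCone A hA \ {0}, 0 < (pairC Z l).im}

open Classical in
/-- The phase `φ^I(Z)` of the imaginary cone with respect to `Z`, normalized by its
representative with `0 < φ₁`, `φ₂ < 1` (which exists and is unique when `Z(I₀) ⊆ ℍ`). -/
def phaseI (A : Matrix ι ι ℤ) (hA : IsGCM A) (Z : ι → ℂ) : ℝ :=
  if h : ∃ p : ℝ × ℝ, p.1 ≤ p.2 ∧ p.2 - p.1 < 1 ∧ 0 < p.1 ∧ p.2 < 1 ∧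
      pairC Z '' (imCone A hA \ {0}) = sector p.1 p.2
  then (h.choose.1 + h.choose.2) / 2 else 0

/-- The retraction `h_t(Z) = e^{iπt(1/2 - φ^I(Z))} · Z`. -/
def hRetract (A : Matrix ι ι ℤ) (hA : IsGCM A) (t : ℝ) (Z : ι → ℂ) : ι → ℂ :=
  Complex.exp (Real.pi * t * (1 / 2 - phaseI A hA Z) * Complex.I) • Z

/-- The wall `W_{i,+}`. -/
def wallPlus (A : Matrix ι ι ℤ) (hA : IsGCM A) (i : ι) : Set (ι → ℂ) :=
  {Z | Z ∈ XregN A hA ∧ ((Z i).im = 0 ∧ 0 < (Z i).re) ∧ ∀ j, j ≠ i → 0 < (Z j).im}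

/-- The wall `W_{i,-}`. -/
def wallMinus (A : Matrix ι ι ℤ) (hA : IsGCM A) (i : ι) : Set (ι → ℂ) :=
  {Z | Z ∈ XregN A hA ∧ ((Z i).im = 0 ∧ (Z i).re < 0) ∧ ∀ j, j ≠ i → 0 < (Z j).im}

/-- The defining relations of the Artin group attached to a symmetric GCM:
`σ i σ j = σ j σ i` if `a i j = 0` and `σ i σ j σ i = σ j σ i σ j` if `a i j = -1`. -/
def artinRels (A : Matrix ι ι ℤ) : Set (FreeGroup ι) :=
  {r | ∃ i j : ι,
    (A i j = 0 ∧ r = FreeGroup.of i * FreeGroup.of j *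
      (FreeGroup.of j * FreeGroup.of i)⁻¹) ∨
    (A i j = -1 ∧ r = FreeGroup.of i * FreeGroup.of j * FreeGroup.of i *
      (FreeGroup.of j * FreeGroup.of i * FreeGroup.of j)⁻¹)}

/-- The Artin group attached to a symmetric GCM. -/
def ArtinGroup (A : Matrix ι ι ℤ) := PresentedGroup (artinRels A)

instance (A : Matrix ι ι ℤ) : Group (ArtinGroup A) :=
  inferInstanceAs (Group (PresentedGroup (artinRels A)))

lemma IsGCM.submatrix {κ : Type*} [Fintype κ] [DecidableEq κ] {A : Matrix ι ι ℤ}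
    (hA : IsGCM A) (f : κ → ι) (hf : Function.Injective f) :
    IsGCM (A.submatrix f f) :=
  ⟨hA.1.submatrix f, fun i => hA.2.1 (f i),
    fun i j hij => hA.2.2 _ _ fun h => hij (hf h)⟩


/-!
For `α ∈ K` and `w = w' r_t` with `ℓ(w') < ℓ(w)` one has `w α = w' α - (α, α_t) w' α_t`,
where `-(α, α_t) ≥ 0` and `w' α_t ≥ 0` because `ℓ(w' r_t) > ℓ(w')`; by induction on `ℓ(w)`,
every positive imaginary root has non-negative coordinates. The fact that `ℓ(w r_s) > ℓ(w)`
forces `w α_s ≥ 0` is proved as in Bourbaki: write `w = v u` with `u` in the rank-two subgroup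
`⟨r_s, r_t⟩` and `v` as short as possible, so that `v α_s, v α_t ≥ 0` by induction, and compute
`u α_s` in rank two.

Since `K` is stable under multiplication by positive integers, so is `Δ^im_+`, and
`r β = (1 - r/n) • 0 + (r/n) • (n β)` lies in the convex hull of `Δ^im_+ ∪ {0}` for `0 ≤ r ≤ n`.
Convexity, stability under scaling and containment in the closed orthant pass to the closure.
-/

theorem _root_.LinearEquiv.det_reflection {R M : Type*} [CommRing R] [AddCommGroup M]
    [Module R M] [Module.Free R M] [Module.Finite R M] {x : M} {f : Module.Dual R M}
    (h : f x = 2) : LinearEquiv.det (Module.reflection h) = -1 := by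
  classical
  let b := Module.Free.chooseBasis R M
  have hM : LinearMap.toMatrix b b (Module.reflection h).toLinearMap =
      1 + Matrix.replicateCol Unit (-b.repr x) * Matrix.replicateRow Unit (fun j => f (b j)) := by
    ext i j
    simp [LinearMap.toMatrix_apply, Module.reflection_apply, Matrix.one_apply, Matrix.mul_apply,
      Finsupp.single_apply, eq_comm, sub_eq_add_neg, mul_comm]
  have hfx : ∑ j, f (b j) * b.repr x j = f x := by
    conv_rhs => rw [← b.sum_repr x]
    simp only [map_sum, map_smul, smul_eq_mul, mul_comm]
  ext
  rw [LinearEquiv.coe_det, ← LinearMap.det_toMatrix b, hM,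
    Matrix.det_one_add_replicateCol_mul_replicateRow]
  simp only [dotProduct, Finsupp.coe_neg, Pi.neg_apply, mul_neg, Finset.sum_neg_distrib, hfx, h]
  norm_num

set_option linter.unusedSectionVars false

section SimpleReflections

variable {A : Matrix ι ι ℤ} (hA : IsGCM A)

lemma corootFn_apply_sroot (i j : ι) : corootFn A i (sroot j) = A j i := by
  simp [corootFn, sroot, Pi.single_apply]

lemma bform_sroot (x : ι → ℤ) (i : ι) : bform A x (sroot i) = corootFn A i x := by
  simp [bform, corootFn, sroot, Pi.single_apply]

lemma sroot_nonneg (i : ι) : 0 ≤ sroot i := Pi.single_nonneg.2 zero_le_one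

lemma srefl_apply (i : ι) (x : ι → ℤ) :
    srefl A hA i x = x - corootFn A i x • sroot i :=
  Module.reflection_apply x _

lemma srefl_sroot_self (i : ι) : srefl A hA i (sroot i) = -sroot i :=
  Module.reflection_apply_self _

lemma srefl_sroot (i j : ι) : srefl A hA i (sroot j) = sroot j - A j i • sroot i := by
  rw [srefl_apply, corootFn_apply_sroot]

@[simp]
lemma srefl_mul_self (i : ι) : srefl A hA i * srefl A hA i = 1 :=
  LinearEquiv.ext (Module.involutive_reflection _)

@[simp]
lemma srefl_inv (i : ι) : (srefl A hA i)⁻¹ = srefl A hA i := rfl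

@[simp]
lemma mul_srefl_mul_srefl (w : (ι → ℤ) ≃ₗ[ℤ] (ι → ℤ)) (i : ι) :
    w * srefl A hA i * srefl A hA i = w := by
  rw [mul_assoc, srefl_mul_self, mul_one]

lemma srefl_mem_weylGroup (i : ι) : srefl A hA i ∈ weylGroup A hA :=
  Subgroup.subset_closure ⟨i, rfl⟩

lemma det_srefl (i : ι) : LinearEquiv.det (srefl A hA i) = -1 :=
  LinearEquiv.det_reflection _

end SimpleReflections

section WordLength

variable {A : Matrix ι ι ℤ} (hA : IsGCM A)

def wordProd (l : List ι) : (ι → ℤ) ≃ₗ[ℤ] (ι → ℤ) := (l.map (srefl A hA)).prod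

@[simp] lemma wordProd_nil : wordProd hA [] = 1 := rfl

@[simp] lemma wordProd_cons (i : ι) (l : List ι) :
    wordProd hA (i :: l) = srefl A hA i * wordProd hA l := List.prod_cons

@[simp] lemma wordProd_append (l₁ l₂ : List ι) :
    wordProd hA (l₁ ++ l₂) = wordProd hA l₁ * wordProd hA l₂ := by
  simp [wordProd]

lemma wordProd_reverse (l : List ι) : wordProd hA l.reverse = (wordProd hA l)⁻¹ := by
  induction l with
  | nil => simp
  | cons i l ih => simp [ih]

lemma wordProd_mem_weylGroup (l : List ι) : wordProd hA l ∈ weylGroup A hA :=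
  Subgroup.list_prod_mem _ <| by simpa using fun i _ => srefl_mem_weylGroup hA i

lemma mem_weylGroup_iff {w : (ι → ℤ) ≃ₗ[ℤ] (ι → ℤ)} :
    w ∈ weylGroup A hA ↔ ∃ l, wordProd hA l = w := by
  refine ⟨fun hw => ?_, fun ⟨l, hl⟩ => hl ▸ wordProd_mem_weylGroup hA l⟩
  induction hw using Subgroup.closure_induction with
  | mem _ hx => obtain ⟨i, rfl⟩ := hx; exact ⟨[i], by simp⟩
  | one => exact ⟨[], rfl⟩
  | mul _ _ _ _ hx hy =>
    obtain ⟨l₁, rfl⟩ := hx; obtain ⟨l₂, rfl⟩ := hy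
    exact ⟨l₁ ++ l₂, wordProd_append hA l₁ l₂⟩
  | inv _ _ hx => obtain ⟨l, rfl⟩ := hx; exact ⟨l.reverse, wordProd_reverse hA l⟩

lemma det_wordProd (l : List ι) : LinearEquiv.det (wordProd hA l) = (-1) ^ l.length := by
  induction l with
  | nil => simp
  | cons i l ih => simp [ih, det_srefl, pow_succ']

-- `sInf ∅ = 0`: the length is only meaningful on the Weyl group.
def weylLength (w : (ι → ℤ) ≃ₗ[ℤ] (ι → ℤ)) : ℕ :=
  sInf {n | ∃ l, wordProd hA l = w ∧ l.length = n}

variable {hA} {w : (ι → ℤ) ≃ₗ[ℤ] (ι → ℤ)}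

lemma weylLength_le_length {l : List ι} (h : wordProd hA l = w) : weylLength hA w ≤ l.length :=
  Nat.sInf_le ⟨l, h, rfl⟩

lemma exists_reduced_word (hw : w ∈ weylGroup A hA) :
    ∃ l, wordProd hA l = w ∧ l.length = weylLength hA w := by
  obtain ⟨l, hl⟩ := (mem_weylGroup_iff hA).1 hw
  exact Nat.sInf_mem (s := {n | ∃ l, wordProd hA l = w ∧ l.length = n}) ⟨l.length, l, hl, rfl⟩

lemma eq_one_of_weylLength_eq_zero (hw : w ∈ weylGroup A hA) (h : weylLength hA w = 0) :
    w = 1 := by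
  obtain ⟨l, rfl, hl⟩ := exists_reduced_word hw
  rw [h, List.length_eq_zero_iff] at hl
  simp [hl]

lemma weylLength_mul_wordProd_le (hw : w ∈ weylGroup A hA) (l : List ι) :
    weylLength hA (w * wordProd hA l) ≤ weylLength hA w + l.length := by
  obtain ⟨m, rfl, hm⟩ := exists_reduced_word hw
  simpa [hm] using weylLength_le_length (wordProd_append hA m l)

lemma weylLength_mul_srefl_le (hw : w ∈ weylGroup A hA) (i : ι) :
    weylLength hA (w * srefl A hA i) ≤ weylLength hA w + 1 := by
  simpa using weylLength_mul_wordProd_le hw [i]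

lemma det_eq_neg_one_pow_weylLength (hw : w ∈ weylGroup A hA) :
    LinearEquiv.det w = (-1) ^ weylLength hA w := by
  obtain ⟨l, rfl, hl⟩ := exists_reduced_word hw
  rw [det_wordProd, hl]

-- The determinant `(-1) ^ ℓ(w)` changes sign under `w ↦ w r_i`.
lemma weylLength_mul_srefl_ne (hw : w ∈ weylGroup A hA) (i : ι) :
    weylLength hA (w * srefl A hA i) ≠ weylLength hA w := by
  intro h
  have hdet := det_eq_neg_one_pow_weylLength (mul_mem hw (srefl_mem_weylGroup hA i))
  rw [h, map_mul, det_srefl, det_eq_neg_one_pow_weylLength hw, mul_neg_one] at hdet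
  rcases Int.units_eq_one_or ((-1) ^ weylLength hA w) with h1 | h1 <;>
    rw [h1] at hdet <;> exact absurd hdet (by decide)

lemma exists_weylLength_mul_srefl_add_one (hw : w ∈ weylGroup A hA) (h : weylLength hA w ≠ 0) :
    ∃ t, weylLength hA (w * srefl A hA t) + 1 = weylLength hA w := by
  obtain ⟨l, rfl, hl⟩ := exists_reduced_word hw
  have hne : l ≠ [] := by rintro rfl; simp_all
  refine ⟨l.getLast hne, le_antisymm ?_ ?_⟩
  · have hdrop : wordProd hA l.dropLast = wordProd hA l * srefl A hA (l.getLast hne) := by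
      conv_rhs => arg 1; rw [← List.dropLast_append_getLast hne]
      simp
    have := weylLength_le_length hdrop
    rw [List.length_dropLast] at this
    omega
  · simpa using weylLength_mul_srefl_le (mul_mem hw (srefl_mem_weylGroup hA (l.getLast hne)))
      (l.getLast hne)

end WordLength

section RankTwo

variable {A : Matrix ι ι ℤ} (hA : IsGCM A) {s t : ι}

lemma IsGCM.apply_eq_of_mem_pair (hA : IsGCM A) {x y : ι} (hx : x ∈ [s, t]) (hy : y ∈ [s, t])
    (hxy : x ≠ y) : A x y = A s t := by
  simp only [List.mem_cons, List.not_mem_nil, or_false] at hx hy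
  rcases hx with rfl | rfl <;> rcases hy with rfl | rfl
  exacts [absurd rfl hxy, rfl, hA.1.apply _ _, absurd rfl hxy]

lemma eq_of_mem_pair_of_ne {x y z : ι} (hx : x ∈ [s, t]) (hy : y ∈ [s, t]) (hz : z ∈ [s, t])
    (hxy : x ≠ y) (hyz : y ≠ z) : z = x := by
  simp only [List.mem_cons, List.not_mem_nil, or_false] at hx hy hz
  rcases hx with rfl | rfl <;> rcases hy with rfl | rfl <;> rcases hz with rfl | rfl <;> tauto

lemma eq_left_of_mem_pair {x : ι} (hx : x ∈ [s, t]) (h : x ≠ t) : s = x := by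
  simp_all [eq_comm]

lemma srefl_commute_of_eq_zero {x y : ι} (h : A x y = 0) :
    srefl A hA x * srefl A hA y = srefl A hA y * srefl A hA x := by
  have h' : A y x = 0 := by rw [hA.1.apply, h]
  ext v : 1
  simp only [LinearEquiv.mul_apply, srefl_apply, map_sub, map_smul, corootFn_apply_sroot, h, h']
  module

lemma srefl_braid_of_eq_neg_one {x y : ι} (h : A x y = -1) :
    srefl A hA x * srefl A hA y * srefl A hA x = srefl A hA y * srefl A hA x * srefl A hA y := by
  have h' : A y x = -1 := by rw [hA.1.apply, h]
  ext v : 1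
  simp only [LinearEquiv.mul_apply, srefl_apply, map_sub, map_smul, corootFn_apply_sroot, h, h',
    hA.2.1]
  module

lemma wordProd_cons_cons_cons_of_eq_zero {x y : ι} (h : A x y = 0) (l : List ι) :
    wordProd hA (x :: y :: x :: l) = wordProd hA (y :: l) := by
  simp only [wordProd_cons, ← mul_assoc, srefl_commute_of_eq_zero hA h]
  simp

lemma wordProd_cons_cons_cons_cons_of_eq_neg_one {x y : ι} (h : A x y = -1) (l : List ι) :
    wordProd hA (x :: y :: x :: y :: l) = wordProd hA (y :: x :: l) := by
  simp only [wordProd_cons, ← mul_assoc, srefl_braid_of_eq_neg_one hA h]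
  simp

lemma srefl_smul_add_smul_left (p q : ℤ) :
    srefl A hA s (p • sroot s + q • sroot t) = (-A s t * q - p) • sroot s + q • sroot t := by
  rw [map_add, map_smul, map_smul, srefl_sroot_self, srefl_sroot, hA.1.apply]
  module

lemma srefl_smul_add_smul_right (p q : ℤ) :
    srefl A hA t (p • sroot s + q • sroot t) = p • sroot s + (-A s t * p - q) • sroot t := by
  rw [map_add, map_smul, map_smul, srefl_sroot_self, srefl_sroot]
  module

-- In the infinite dihedral case the coefficient of the first letter's root dominates,
-- and this is preserved by each further reflection.
lemma exists_nonneg_wordProd_sroot_of_le_neg_two (hst : s ≠ t) (hb : A s t ≤ -2) :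
    ∀ l : List ι, l ⊆ [s, t] → l.IsChain (· ≠ ·) → l.getLast? = some t →
    ∃ p q : ℤ, 0 ≤ p ∧ 0 ≤ q ∧ wordProd hA l (sroot s) = p • sroot s + q • sroot t ∧
      (l.head? = some s → q ≤ p) ∧ (l.head? = some t → p ≤ q)
  | [], _, _, hlast => by simp at hlast
  | [x], _, _, hlast => by
    obtain rfl : t = x := by simpa [eq_comm] using hlast
    refine ⟨1, -A s t, zero_le_one, by omega, ?_, by simp [hst.symm], fun _ => by omega⟩
    rw [wordProd_cons, wordProd_nil, mul_one, srefl_sroot hA t s]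
    module
  | x :: y :: l, hl, hc, hlast => by
    rw [List.isChain_cons_cons] at hc
    obtain ⟨p, q, hp, hq, heq, hps, hqt⟩ :=
      exists_nonneg_wordProd_sroot_of_le_neg_two hst hb (y :: l) (List.subset_of_cons_subset hl)
        hc.2 (by simpa using hlast)
    have hx := hl (List.mem_cons_self ..)
    have hy := hl (List.mem_cons_of_mem _ (List.mem_cons_self ..))
    simp only [List.mem_cons, List.not_mem_nil, or_false, eq_comm (a := x), eq_comm (a := y)]
      at hx hy
    rcases hx with rfl | rfl
    · obtain rfl : t = y := hy.resolve_left hc.1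
      have := hqt (by simp)
      refine ⟨-A s t * q - p, q, by nlinarith, hq, ?_, fun _ => by nlinarith, by simp [hst]⟩
      rw [wordProd_cons, LinearEquiv.mul_apply, heq, srefl_smul_add_smul_left]
    · obtain rfl : s = y := hy.resolve_right hc.1
      have := hps (by simp)
      refine ⟨p, -A s t * p - q, hp, by nlinarith, ?_, by simp [hst.symm], fun _ => by nlinarith⟩
      rw [wordProd_cons, LinearEquiv.mul_apply, heq, srefl_smul_add_smul_right]

end RankTwo

section Dichotomy

variable {A : Matrix ι ι ℤ} (hA : IsGCM A) {s t : ι}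

lemma exists_isChain_ne_wordProd_eq (l : List ι) :
    ∃ l', l'.IsChain (· ≠ ·) ∧ l'.length ≤ l.length ∧ l' ⊆ l ∧ wordProd hA l' = wordProd hA l := by
  induction l with
  | nil => exact ⟨[], .nil, le_rfl, List.Subset.refl _, rfl⟩
  | cons x l ih =>
    obtain ⟨l', hc, hlen, hsub, hP⟩ := ih
    match l', hc with
    | [], _ => exact ⟨[x], .singleton x, by simp, by simp, by simp [← hP]⟩
    | y :: l', hc =>
      by_cases hxy : x = y
      · subst hxy
        refine ⟨l', hc.tail, by simp at hlen ⊢; omega,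
          fun z hz => List.mem_cons_of_mem _ (hsub (List.mem_cons_of_mem _ hz)), ?_⟩
        rw [wordProd_cons, ← hP, wordProd_cons, ← mul_assoc, srefl_mul_self, one_mul]
      · exact ⟨x :: y :: l', List.isChain_cons_cons.2 ⟨hxy, hc⟩, by simpa using hlen,
          List.cons_subset_cons _ hsub, by simp [← hP]⟩

-- The rank-two form of `ℓ(u r_s) > ℓ(u) → u α_s ≥ 0`, with lengths measured by `{s, t}`-words.
variable (s t) in
def RankTwoDichotomy (l : List ι) : Prop :=
  (∃ p q : ℤ, 0 ≤ p ∧ 0 ≤ q ∧ wordProd hA l (sroot s) = p • sroot s + q • sroot t) ∨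
  ∃ l' ⊆ [s, t], l'.length ≤ l.length ∧ wordProd hA l' = wordProd hA l * srefl A hA s

variable {hA}

lemma RankTwoDichotomy.of_wordProd_eq {l₁ l₂ : List ι} (h : RankTwoDichotomy hA s t l₁)
    (hP : wordProd hA l₁ = wordProd hA l₂) (hlen : l₁.length ≤ l₂.length) :
    RankTwoDichotomy hA s t l₂ := by
  rcases h with ⟨p, q, hp, hq, h⟩ | ⟨l', hl', hlen', h⟩
  · exact .inl ⟨p, q, hp, hq, hP ▸ h⟩
  · exact .inr ⟨l', hl', hlen'.trans hlen, hP ▸ h⟩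

lemma rankTwoDichotomy_nil : RankTwoDichotomy hA s t [] :=
  .inl ⟨1, 0, zero_le_one, le_rfl, by simp⟩

lemma rankTwoDichotomy_singleton (hst : s ≠ t) : RankTwoDichotomy hA s t [t] := by
  refine .inl ⟨1, -A s t, zero_le_one, neg_nonneg.2 (hA.2.2 s t hst), ?_⟩
  rw [wordProd_cons, wordProd_nil, mul_one, srefl_sroot hA t s]
  module

lemma rankTwoDichotomy_concat {l : List ι} (hl : l ⊆ [s, t]) :
    RankTwoDichotomy hA s t (l ++ [s]) :=
  .inr ⟨l, hl, by simp, by simp⟩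

lemma rankTwoDichotomy_of_le_neg_two (hst : s ≠ t) {l : List ι} (hl : l ⊆ [s, t])
    (hc : l.IsChain (· ≠ ·)) (hlast : l.getLast? = some t) (hb : A s t ≤ -2) :
    RankTwoDichotomy hA s t l :=
  have ⟨p, q, hp, hq, h, _⟩ :=
    exists_nonneg_wordProd_sroot_of_le_neg_two hA hst hb l hl hc hlast
  .inl ⟨p, q, hp, hq, h⟩

lemma rankTwoDichotomy_of_eq_zero (hst : s ≠ t) {l : List ι} (hl : l ⊆ [s, t])
    (hc : l.IsChain (· ≠ ·)) (hlast : l.getLast? = some t) (ha : A s t = 0)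
    (ih : ∀ l' ⊆ [s, t], l'.length < l.length → RankTwoDichotomy hA s t l') :
    RankTwoDichotomy hA s t l := by
  match l, hl, hc, hlast with
  | [x], _, _, hlast =>
    obtain rfl : t = x := by simpa [eq_comm] using hlast
    exact rankTwoDichotomy_singleton hst
  | [x, y], hl, hc, hlast =>
    obtain rfl : t = y := by simpa [eq_comm] using hlast
    obtain rfl : s = x := eq_left_of_mem_pair (hl (by simp)) (List.isChain_pair.1 hc)
    refine .inr ⟨[t], by simp, by simp, ?_⟩
    simp [srefl_commute_of_eq_zero hA ha, mul_assoc]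
  | x :: y :: z :: l, hl, hc, _ =>
    simp only [List.isChain_cons_cons] at hc
    obtain rfl : x = z := (eq_of_mem_pair_of_ne (hl (by simp)) (hl (by simp)) (hl (by simp))
      hc.1 hc.2.1).symm
    have hxy := (hA.apply_eq_of_mem_pair (hl (by simp)) (hl (by simp)) hc.1).trans ha
    exact (ih (y :: l) (fun v hv => hl (by simp at hv ⊢; tauto)) (by simp)).of_wordProd_eq
      (wordProd_cons_cons_cons_of_eq_zero hA hxy l).symm (by simp)

lemma rankTwoDichotomy_of_eq_neg_one (hst : s ≠ t) {l : List ι} (hl : l ⊆ [s, t])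
    (hc : l.IsChain (· ≠ ·)) (hlast : l.getLast? = some t) (ha : A s t = -1)
    (ih : ∀ l' ⊆ [s, t], l'.length < l.length → RankTwoDichotomy hA s t l') :
    RankTwoDichotomy hA s t l := by
  match l, hl, hc, hlast with
  | [x], _, _, hlast =>
    obtain rfl : t = x := by simpa [eq_comm] using hlast
    exact rankTwoDichotomy_singleton hst
  | [x, y], hl, hc, hlast =>
    obtain rfl : t = y := by simpa [eq_comm] using hlast
    obtain rfl : s = x := eq_left_of_mem_pair (hl (by simp)) (List.isChain_pair.1 hc)
    refine .inl ⟨0, 1, le_rfl, zero_le_one, ?_⟩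
    simp only [wordProd_cons, wordProd_nil, mul_one, LinearEquiv.mul_apply, srefl_sroot,
      map_sub, map_smul, ha, hA.1.apply s t, hA.2.1]
    module
  | [x, y, z], hl, hc, hlast =>
    obtain rfl : t = z := by simpa [eq_comm] using hlast
    simp only [List.isChain_cons_cons, List.isChain_singleton, and_true] at hc
    obtain rfl : t = x := eq_of_mem_pair_of_ne (hl (by simp)) (hl (by simp)) (hl (by simp))
      hc.1 hc.2
    obtain rfl : s = y := eq_left_of_mem_pair (hl (by simp)) hc.1.symm
    refine .inr ⟨[s, t], by simp, by simp, ?_⟩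
    simp only [wordProd_cons, wordProd_nil, mul_one]
    rw [← mul_assoc, ← srefl_braid_of_eq_neg_one hA ha, mul_srefl_mul_srefl]
  | x :: y :: z :: u :: l, hl, hc, _ =>
    simp only [List.isChain_cons_cons] at hc
    obtain rfl : x = z := (eq_of_mem_pair_of_ne (hl (by simp)) (hl (by simp)) (hl (by simp))
      hc.1 hc.2.1).symm
    obtain rfl : y = u := (eq_of_mem_pair_of_ne (hl (by simp)) (hl (by simp)) (hl (by simp))
      hc.2.1 hc.2.2.1).symm
    have hxy := (hA.apply_eq_of_mem_pair (hl (by simp)) (hl (by simp)) hc.1).trans ha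
    exact (ih (y :: x :: l) (fun v hv => hl (by simp at hv ⊢; tauto)) (by simp)).of_wordProd_eq
      (wordProd_cons_cons_cons_cons_of_eq_neg_one hA hxy l).symm (by simp)

lemma rankTwoDichotomy (hst : s ≠ t) (l : List ι) (hl : l ⊆ [s, t]) :
    RankTwoDichotomy hA s t l := by
  induction h : l.length using Nat.strong_induction_on generalizing l with
  | _ n ih =>
  obtain ⟨l', hc, hlen, hsub, hP⟩ := exists_isChain_ne_wordProd_eq hA l
  refine RankTwoDichotomy.of_wordProd_eq ?_ hP hlen
  have ih' : ∀ l'' ⊆ [s, t], l''.length < l'.length → RankTwoDichotomy hA s t l'' :=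
    fun l'' hl'' hlt => ih _ (by omega) l'' hl'' rfl
  rcases l'.eq_nil_or_concat' with rfl | ⟨l₀, x, rfl⟩
  · exact rankTwoDichotomy_nil
  have hl₀ : l₀ ⊆ [s, t] := fun y hy => hl (hsub (List.mem_append_left _ hy))
  obtain rfl | rfl : s = x ∨ t = x := by simpa [eq_comm] using hl (hsub (by simp))
  · exact rankTwoDichotomy_concat hl₀
  have hnonpos := hA.2.2 s t hst
  obtain hb | ha | ha : A s t ≤ -2 ∨ A s t = -1 ∨ A s t = 0 := by omega
  · exact rankTwoDichotomy_of_le_neg_two hst (List.Subset.trans hsub hl) hc (by simp) hb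
  · exact rankTwoDichotomy_of_eq_neg_one hst (List.Subset.trans hsub hl) hc (by simp) ha ih'
  · exact rankTwoDichotomy_of_eq_zero hst (List.Subset.trans hsub hl) hc (by simp) ha ih'

end Dichotomy

section Positivity

variable {A : Matrix ι ι ℤ} {hA : IsGCM A} {w : (ι → ℤ) ≃ₗ[ℤ] (ι → ℤ)}

-- `v` is a shortest left factor of `w` modulo the rank-two parabolic subgroup `⟨r_s, r_t⟩`.
lemma exists_parabolic_factorization (hw : w ∈ weylGroup A hA) {s t : ι}
    (ht : weylLength hA (w * srefl A hA t) + 1 = weylLength hA w) :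
    ∃ v ∈ weylGroup A hA, ∃ l ⊆ [s, t], v * wordProd hA l = w ∧
      weylLength hA v + l.length = weylLength hA w ∧ weylLength hA v < weylLength hA w ∧
      ∀ x ∈ [s, t], weylLength hA v < weylLength hA (v * srefl A hA x) := by
  classical
  let IsFactorLength (m : ℕ) : Prop := ∃ v, ∃ l ⊆ [s, t], v * wordProd hA l = w ∧
    weylLength hA v + l.length = weylLength hA w ∧ weylLength hA v = m
  have hwt : IsFactorLength (weylLength hA (w * srefl A hA t)) :=
    ⟨_, [t], by simp, by simp, by simpa using ht, rfl⟩
  obtain ⟨v, l, hl, hvw, hlen, hm⟩ := Nat.find_spec ⟨_, hwt⟩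
  have hvW : v ∈ weylGroup A hA := by
    rw [eq_mul_inv_of_mul_eq hvw]
    exact mul_mem hw (inv_mem (wordProd_mem_weylGroup hA l))
  refine ⟨v, hvW, l, hl, hvw, hlen, by have := Nat.find_min' ⟨_, hwt⟩ hwt; omega, fun x hx => ?_⟩
  by_contra! hle
  have hlt := lt_of_le_of_ne hle (weylLength_mul_srefl_ne hvW x)
  have hvx : v * srefl A hA x * wordProd hA (x :: l) = w := by simp [← hvw, ← mul_assoc]
  have hge := weylLength_mul_wordProd_le (mul_mem hvW (srefl_mem_weylGroup hA x)) (x :: l)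
  rw [hvx, List.length_cons] at hge
  have := Nat.find_min' ⟨_, hwt⟩ (m := weylLength hA (v * srefl A hA x))
    ⟨_, x :: l, List.cons_subset.2 ⟨hx, hl⟩, hvx, by simp only [List.length_cons]; omega, rfl⟩
  omega

theorem sroot_nonneg_of_weylLength_lt (hw : w ∈ weylGroup A hA) {s : ι}
    (hs : weylLength hA w < weylLength hA (w * srefl A hA s)) : 0 ≤ w (sroot s) := by
  induction h : weylLength hA w using Nat.strong_induction_on generalizing w s with
  | _ n ih =>
  by_cases h0 : weylLength hA w = 0
  · rw [eq_one_of_weylLength_eq_zero hw h0]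
    exact sroot_nonneg s
  obtain ⟨t, ht⟩ := exists_weylLength_mul_srefl_add_one hw h0
  have hst : s ≠ t := by rintro rfl; omega
  obtain ⟨v, hvW, l, hl, rfl, hlen, hlt, hmin⟩ := exists_parabolic_factorization hw (s := s) ht
  have hvs := ih _ (h ▸ hlt) hvW (hmin s (by simp)) rfl
  have hvt := ih _ (h ▸ hlt) hvW (hmin t (by simp)) rfl
  rcases rankTwoDichotomy hst l hl with ⟨p, q, hp, hq, hpq⟩ | ⟨l', -, hlen', hl'⟩
  · rw [LinearEquiv.mul_apply, hpq, map_add, map_smul, map_smul]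
    exact add_nonneg (smul_nonneg hp hvs) (smul_nonneg hq hvt)
  · have := weylLength_mul_wordProd_le hvW l'
    rw [hl', ← mul_assoc] at this
    omega

theorem nonneg_of_mem_fundamentalSet (hw : w ∈ weylGroup A hA) {α : ι → ℤ}
    (hα : α ∈ fundamentalSet A) : 0 ≤ w α := by
  induction h : weylLength hA w using Nat.strong_induction_on generalizing w with
  | _ n ih =>
  by_cases h0 : weylLength hA w = 0
  · rw [eq_one_of_weylLength_eq_zero hw h0]
    exact hα.1
  obtain ⟨t, ht⟩ := exists_weylLength_mul_srefl_add_one hw h0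
  have hw' := mul_mem hw (srefl_mem_weylGroup hA t)
  have hcoroot : corootFn A t α ≤ 0 := bform_sroot α t ▸ hα.2.2.2 t
  have hsplit : w α = (w * srefl A hA t) α + (-corootFn A t α) • (w * srefl A hA t) (sroot t) := by
    conv_lhs => rw [← mul_srefl_mul_srefl hA w t]
    rw [LinearEquiv.mul_apply, srefl_apply, map_sub, map_smul]
    module
  rw [hsplit]
  refine add_nonneg (ih _ (by omega) hw' rfl) (smul_nonneg (neg_nonneg.2 hcoroot) ?_)
  exact sroot_nonneg_of_weylLength_lt hw' (by rw [mul_srefl_mul_srefl]; omega)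

end Positivity

section Cone

lemma smul_mem_convexHull_insert_zero {E : Type*} [AddCommGroup E] [Module ℝ E] {S : Set E}
    (hS : ∀ x ∈ S, ∀ n : ℕ, n ≠ 0 → (n : ℝ) • x ∈ S) {r : ℝ} (hr : 0 ≤ r) {x : E}
    (hx : x ∈ convexHull ℝ (insert 0 S)) : r • x ∈ convexHull ℝ (insert 0 S) := by
  have hconv := convex_convexHull ℝ (insert 0 S)
  have h0 : (0 : E) ∈ convexHull ℝ (insert 0 S) := subset_convexHull ℝ _ (Set.mem_insert _ _)
  refine convexHull_min ?_ (hconv.smul_preimage r) hx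
  rintro y (rfl | hy)
  · simpa using h0
  obtain ⟨n, hn⟩ := exists_nat_gt r
  have hn0 : (n : ℝ) ≠ 0 := (hr.trans_lt hn).ne'
  have hry : r • y = (r / n) • ((n : ℝ) • y) := by rw [smul_smul, div_mul_cancel₀ _ hn0]
  rw [Set.mem_preimage, hry]
  exact hconv.smul_mem_of_zero_mem h0
    (subset_convexHull ℝ _ (Set.mem_insert_of_mem _ (hS y hy n (by exact_mod_cast hn0))))
    ⟨by positivity, (div_le_one (by positivity)).2 hn.le⟩

end Cone

section ImaginaryRoots

variable {A : Matrix ι ι ℤ} {hA : IsGCM A}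

lemma nsmul_mem_fundamentalSet {α : ι → ℤ} (hα : α ∈ fundamentalSet A) {n : ℕ} (hn : n ≠ 0) :
    n • α ∈ fundamentalSet A := by
  obtain ⟨hnonneg, hne, hconn, hform⟩ := hα
  have hsupp : {i | (n • α) i ≠ 0} = {i | α i ≠ 0} := by
    ext i
    simp [hn]
  refine ⟨fun i => nsmul_nonneg (hnonneg i) n, smul_ne_zero hn hne, hsupp ▸ hconn, fun i => ?_⟩
  rw [bform_sroot, map_nsmul, ← bform_sroot]
  exact nsmul_nonpos (hform i) n

lemma nsmul_mem_posImRoots {β : ι → ℤ} (hβ : β ∈ posImRoots A hA) {n : ℕ} (hn : n ≠ 0) :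
    n • β ∈ posImRoots A hA := by
  obtain ⟨w, hw, α, hα, rfl⟩ := hβ
  exact ⟨w, hw, n • α, nsmul_mem_fundamentalSet hα hn, (map_nsmul w n α).symm⟩

lemma nonneg_of_mem_posImRoots {β : ι → ℤ} (hβ : β ∈ posImRoots A hA) : 0 ≤ β := by
  obtain ⟨w, hw, α, hα, rfl⟩ := hβ
  exact nonneg_of_mem_fundamentalSet hw hα

lemma castR_nsmul (n : ℕ) (β : ι → ℤ) : castR (n • β) = (n : ℝ) • castR β := by
  ext i
  simp [castR]

lemma castR_nonneg {β : ι → ℤ} (hβ : 0 ≤ β) : 0 ≤ castR β :=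
  fun i => Int.cast_nonneg (hβ i)

end ImaginaryRoots

theorem imCone_convex_cone_subset_nonneg_general (A : Matrix ι ι ℤ) (hA : IsGCM A) :
    Convex ℝ (imCone A hA) ∧
    (∀ r : ℝ, 0 ≤ r → ∀ x ∈ imCone A hA, r • x ∈ imCone A hA) ∧
    (∀ x ∈ imCone A hA, ∀ i, 0 ≤ x i) := by
  have hnsmul : ∀ x ∈ castR '' posImRoots A hA, ∀ n : ℕ, n ≠ 0 →
      (n : ℝ) • x ∈ castR '' posImRoots A hA := by
    rintro _ ⟨β, hβ, rfl⟩ n hn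
    exact ⟨n • β, nsmul_mem_posImRoots hβ hn, castR_nsmul n β⟩
  have hnonneg : insert 0 (castR '' posImRoots A hA) ⊆ Set.Ici (0 : ι → ℝ) := by
    rintro _ (rfl | ⟨β, hβ, rfl⟩)
    exacts [Set.self_mem_Ici, castR_nonneg (nonneg_of_mem_posImRoots hβ)]
  refine ⟨(convex_convexHull ℝ _).closure, fun r hr => ?_, fun x hx => ?_⟩
  · exact Set.MapsTo.closure (fun y hy => smul_mem_convexHull_insert_zero hnsmul hr hy)
      (continuous_const_smul r)
  · exact closure_minimal (convexHull_min hnonneg (convex_Ici 0)) isClosed_Ici hx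

/-- if `Δ^im_+ ≠ ∅`, the imaginary cone `I` is a convex cone contained in
`∑ ℝ_{≥0} α_i`. -/
theorem imCone_convex_cone_subset_nonneg (A : Matrix ι ι ℤ) (hA : IsGCM A)
    (hne : (posImRoots A hA).Nonempty) :
    Convex ℝ (imCone A hA) ∧
    (∀ r : ℝ, 0 ≤ r → ∀ x ∈ imCone A hA, r • x ∈ imCone A hA) ∧
    (∀ x ∈ imCone A hA, ∀ i, 0 ≤ x i) :=
  imCone_convex_cone_subset_nonneg_general A hA

end KacMoodyStab
end
end

section
/- The subset X = V \ ∪_{λ∈I₀} H_λ is an open subset of V (with the Euclidean topology on V ≅ ℂ^n). -/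
/-!
Positive integer multiples of positive imaginary roots are again positive imaginary roots, so
`I` is a closed cone and `Z ∈ X` iff `Z` does not vanish on the compact set of unit vectors
of `I`. Non-vanishing of the continuous pairing on a compact set persists for nearby `Z`
(tube lemma).
-/

open scoped BigOperators

noncomputable section

namespace KacMoodyStab

variable {ι : Type*} [Fintype ι] [DecidableEq ι]

section ConeScaling

variable {E : Type*} [AddCommGroup E] [Module ℝ E]

open Pointwise in
lemma smul_mem_convexHull_insert_zero_s2 {s : Set E}
    (hs : ∀ n : ℕ, n ≠ 0 → ∀ x ∈ s, (n : ℝ) • x ∈ s) {c : ℝ} (hc : 0 ≤ c) {x : E}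
    (hx : x ∈ convexHull ℝ (insert 0 s)) : c • x ∈ convexHull ℝ (insert 0 s) := by
  set n := ⌈c⌉₊ + 1
  have hn : (0 : ℝ) < n := by positivity
  have hscale : (n : ℝ) • insert (0 : E) s ⊆ insert 0 s := by
    rintro _ ⟨y, hy, rfl⟩
    rcases hy with rfl | hy
    · simp
    · exact Or.inr (hs n (Nat.succ_ne_zero _) y hy)
  have hnx : (n : ℝ) • x ∈ convexHull ℝ (insert 0 s) :=
    convexHull_mono hscale (convexHull_smul (n : ℝ) (insert 0 s) ▸ Set.smul_mem_smul_set hx)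
  have hcn : c / n ≤ 1 := (div_le_one hn).2 ((Nat.le_ceil c).trans (by simp [n]))
  rw [show c • x = (c / n) • ((n : ℝ) • x) by rw [smul_smul, div_mul_cancel₀ _ hn.ne']]
  exact (convex_convexHull ℝ _).smul_mem_of_zero_mem
    (subset_convexHull ℝ _ (Set.mem_insert _ _)) hnx ⟨by positivity, hcn⟩

end ConeScaling

lemma fundamentalSet_nsmul (A : Matrix ι ι ℤ) {α : ι → ℤ} (hα : α ∈ fundamentalSet A)
    {n : ℕ} (hn : n ≠ 0) : (n : ℤ) • α ∈ fundamentalSet A := by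
  obtain ⟨hnonneg, hne, hconn, hdom⟩ := hα
  have hn' : (n : ℤ) ≠ 0 := by exact_mod_cast hn
  have hsupp : {i | ((n : ℤ) • α) i ≠ 0} = {i | α i ≠ 0} := by
    ext i; simp [hn]
  refine ⟨fun i => ?_, smul_ne_zero hn' hne, hsupp ▸ hconn, fun i => ?_⟩
  · simpa using mul_nonneg (Int.natCast_nonneg n) (hnonneg i)
  · have : bform A ((n : ℤ) • α) (sroot i) = n * bform A α (sroot i) := by
      simp [bform, Finset.mul_sum, mul_assoc]
    rw [this]
    exact mul_nonpos_of_nonneg_of_nonpos (Int.natCast_nonneg n) (hdom i)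

lemma posImRoots_nsmul (A : Matrix ι ι ℤ) (hA : IsGCM A) {β : ι → ℤ}
    (hβ : β ∈ posImRoots A hA) {n : ℕ} (hn : n ≠ 0) : (n : ℤ) • β ∈ posImRoots A hA := by
  obtain ⟨w, hw, α, hα, rfl⟩ := hβ
  exact ⟨w, hw, (n : ℤ) • α, fundamentalSet_nsmul A hα hn, (map_smul w _ _).symm⟩

omit [Fintype ι] [DecidableEq ι] in
lemma castR_zsmul (m : ℤ) (α : ι → ℤ) : castR (m • α) = (m : ℝ) • castR α := by
  ext i; simp [castR]

lemma imCone_smul_mem (A : Matrix ι ι ℤ) (hA : IsGCM A) {c : ℝ} (hc : 0 ≤ c)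
    {l : ι → ℝ} (hl : l ∈ imCone A hA) : c • l ∈ imCone A hA := by
  have hroots : ∀ n : ℕ, n ≠ 0 → ∀ x ∈ castR '' posImRoots A hA,
      (n : ℝ) • x ∈ castR '' posImRoots A hA := by
    rintro n hn _ ⟨β, hβ, rfl⟩
    exact ⟨(n : ℤ) • β, posImRoots_nsmul A hA hβ hn, by rw [castR_zsmul]; norm_cast⟩
  refine closure_mono ?_ (smul_closure_subset c _ (Set.smul_mem_smul_set hl))
  rintro _ ⟨x, hx, rfl⟩
  exact smul_mem_convexHull_insert_zero_s2 hroots hc hx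

omit [DecidableEq ι] in
lemma pairC_smul (Z : ι → ℂ) (c : ℝ) (l : ι → ℝ) :
    pairC Z (c • l) = c * pairC Z l := by
  simp only [pairC, Pi.smul_apply, smul_eq_mul, Complex.ofReal_mul, Finset.mul_sum]
  exact Finset.sum_congr rfl fun i _ => by ring

omit [DecidableEq ι] in
lemma continuous_pairC : Continuous fun p : (ι → ℂ) × (ι → ℝ) => pairC p.1 p.2 := by
  unfold pairC
  fun_prop

lemma Xset_eq_setOf_sphere (A : Matrix ι ι ℤ) (hA : IsGCM A) :
    Xset A hA = {Z | ∀ l ∈ imCone A hA ∩ Metric.sphere 0 1, pairC Z l ≠ 0} := by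
  ext Z
  refine ⟨fun hZ l hl => hZ l ⟨hl.1, ?_⟩, fun hZ l hl => ?_⟩
  · exact Metric.ne_of_mem_sphere hl.2 one_ne_zero
  · obtain ⟨hlI, hl0⟩ := hl
    have hnorm : 0 < ‖l‖ := norm_pos_iff.2 hl0
    have hunit : ‖l‖⁻¹ • l ∈ imCone A hA ∩ Metric.sphere 0 1 :=
      ⟨imCone_smul_mem A hA (inv_nonneg.2 hnorm.le) hlI, by
        simp [norm_smul, hnorm.ne']⟩
    intro h0
    exact hZ _ hunit (by rw [pairC_smul, h0, mul_zero])

/-- `X = V \\ ∪_{λ ∈ I₀} H_λ` is open. -/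
theorem isOpen_Xset (A : Matrix ι ι ℤ) (hA : IsGCM A) :
    IsOpen (Xset A hA) := by
  have hK : IsCompact (imCone A hA ∩ Metric.sphere 0 1) :=
    (isCompact_sphere 0 1).inter_left isClosed_closure
  rw [Xset_eq_setOf_sphere, isOpen_iff_eventually]
  exact fun Z hZ => hK.eventually_forall_of_forall_eventually fun l hl =>
    continuous_pairC.continuousAt.eventually_ne (hZ l hl)

end KacMoodyStab
end
end

section
/- Let S ⊂ ℂ \ {0} be a non-empty compact convex set. Then the cone ℝ_{>0}·S = {r·z : r > 0, z ∈ S} is of the form {r e^{iπφ} ∈ ℂ : r > 0 and φ₁ ≤ φ ≤ φ₂} for some real numbers φ₁ ≤ φ₂ with φ₂ − φ₁ < 1. -/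
open scoped BigOperators

noncomputable section

/-!
By Hahn–Banach, `S` lies in an open half-plane `{z | 0 < re (z * c)}`. There
`z ↦ (arg (z * c) - arg c) / π` is a continuous choice of angle (in units of `π`) with values in
an open interval of length `1`. On the compact connected set `S` it attains a minimum `φ₁` and a
maximum `φ₂` and, by the intermediate value theorem, every value in between; positive scaling
then sweeps out exactly the sector between `φ₁` and `φ₂`.
-/

open Complex ComplexConjugate
open scoped Real

theorem exists_dual_forall_pos_of_zero_notMem {E : Type*} [AddCommGroup E] [TopologicalSpace E]
    [Module ℝ E] [IsTopologicalAddGroup E] [ContinuousSMul ℝ E] [LocallyConvexSpace ℝ E]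
    {S : Set E} (hconv : Convex ℝ S) (hclosed : IsClosed S) (h0 : (0 : E) ∉ S) :
    ∃ f : StrongDual ℝ E, ∀ z ∈ S, 0 < f z := by
  obtain ⟨f, u, hfS, hu⟩ := geometric_hahn_banach_closed_point hconv hclosed h0
  refine ⟨-f, fun z hz => ?_⟩
  rw [map_zero] at hu
  simpa using (hfS z hz).trans hu

theorem Complex.exists_forall_re_mul_pos {S : Set ℂ} (hconv : Convex ℝ S)
    (hclosed : IsClosed S) (h0 : (0 : ℂ) ∉ S) : ∃ c : ℂ, ∀ z ∈ S, 0 < (z * c).re := by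
  obtain ⟨f, hf⟩ := exists_dual_forall_pos_of_zero_notMem hconv hclosed h0
  refine ⟨conj ((InnerProductSpace.toDual ℝ ℂ).symm f), fun z hz => ?_⟩
  rw [← Complex.inner, InnerProductSpace.toDual_symm_apply]
  exact hf z hz

theorem Complex.norm_mul_exp_arg_mul_sub_arg {c : ℂ} (hc : c ≠ 0) (z : ℂ) :
    (‖z‖ : ℂ) * exp ((arg (z * c) - arg c : ℝ) * I) = z := by
  have hc' : (‖c‖ : ℂ) ≠ 0 := ofReal_ne_zero.mpr (norm_ne_zero_iff.mpr hc)
  rw [ofReal_sub, sub_mul, exp_sub, ← mul_div_assoc, div_eq_iff (exp_ne_zero _)]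
  refine mul_right_cancel₀ hc' ?_
  calc (‖z‖ : ℂ) * exp (arg (z * c) * I) * ‖c‖ = ‖z * c‖ * exp (arg (z * c) * I) := by
        push_cast [norm_mul]
        ring
    _ = z * c := norm_mul_exp_arg_mul_I _
    _ = z * exp (arg c * I) * ‖c‖ := by
        conv_lhs => rw [← norm_mul_exp_arg_mul_I c]
        ring

theorem Complex.continuousOn_arg_mul_const {S : Set ℂ} {c : ℂ} (hc : ∀ z ∈ S, 0 < (z * c).re) :
    ContinuousOn (fun z => arg (z * c)) S := fun z hz =>
  (ContinuousAt.comp (g := arg) (f := (· * c))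
    (continuousAt_arg (mem_slitPlane_iff.mpr (Or.inl (hc z hz))))
    (continuous_mul_const c).continuousAt).continuousWithinAt

theorem Complex.arg_sub_arg_lt_pi {z w : ℂ} (hz : 0 < z.re) (hw : 0 < w.re) :
    arg z - arg w < π := by
  have hz' := abs_lt.mp (abs_arg_lt_pi_div_two_iff.mpr (Or.inl hz))
  have hw' := abs_lt.mp (abs_arg_lt_pi_div_two_iff.mpr (Or.inl hw))
  linarith [hz'.2, hw'.1]

namespace KacMoodyStab

theorem setOf_pos_smul_eq_sector {S : Set ℂ} (hS : IsPreconnected S) (h0 : (0 : ℂ) ∉ S)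
    {θ : ℂ → ℝ} (hθ : ContinuousOn θ S) (hpolar : ∀ z ∈ S, (‖z‖ : ℂ) * exp (π * θ z * I) = z)
    {z₁ z₂ : ℂ} (hz₁ : z₁ ∈ S) (hz₂ : z₂ ∈ S) (hmin : IsMinOn θ S z₁) (hmax : IsMaxOn θ S z₂) :
    {z : ℂ | ∃ r : ℝ, 0 < r ∧ ∃ s ∈ S, z = r • s} = sector (θ z₁) (θ z₂) := by
  have hnorm : ∀ s ∈ S, 0 < ‖s‖ := fun s hs => norm_pos_iff.mpr (ne_of_mem_of_not_mem hs h0)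
  ext z
  constructor
  · rintro ⟨r, hr, s, hs, rfl⟩
    refine ⟨r * ‖s‖, mul_pos hr (hnorm s hs), θ s, hmin hs, hmax hs, ?_⟩
    rw [real_smul, ofReal_mul, mul_assoc, hpolar s hs]
  · rintro ⟨r, hr, φ, hφ₁, hφ₂, rfl⟩
    obtain ⟨s, hs, rfl⟩ := hS.intermediate_value hz₁ hz₂ hθ ⟨hφ₁, hφ₂⟩
    refine ⟨r / ‖s‖, div_pos hr (hnorm s hs), s, hs, ?_⟩
    have hs' : (‖s‖ : ℂ) ≠ 0 := ofReal_ne_zero.mpr (hnorm s hs).ne'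
    have hexp : exp (π * θ s * I) = s / ‖s‖ := by
      rw [eq_div_iff hs', mul_comm, hpolar s hs]
    rw [hexp, real_smul]
    push_cast
    field_simp

/-- the cone over a non-empty compact convex subset of `ℂ \\ {0}` is a
sector of angular width `< π`. -/
theorem cone_of_compact_convex_eq_sector (S : Set ℂ) (hne : S.Nonempty)
    (hcpt : IsCompact S) (hconv : Convex ℝ S) (h0 : (0 : ℂ) ∉ S) :
    ∃ φ₁ φ₂ : ℝ, φ₁ ≤ φ₂ ∧ φ₂ - φ₁ < 1 ∧
      {z : ℂ | ∃ r : ℝ, 0 < r ∧ ∃ s ∈ S, z = r • s} = sector φ₁ φ₂ := by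
  obtain ⟨c, hc⟩ := exists_forall_re_mul_pos hconv hcpt.isClosed h0
  have hc0 : c ≠ 0 := by
    rintro rfl
    obtain ⟨s, hs⟩ := hne
    simpa using hc s hs
  set θ : ℂ → ℝ := fun z => (arg (z * c) - arg c) / π
  have hθ : ContinuousOn θ S := ((continuousOn_arg_mul_const hc).sub continuousOn_const).div_const π
  have hpolar : ∀ z ∈ S, (‖z‖ : ℂ) * exp (π * θ z * I) = z := fun z _ => by
    have hπθ : (π : ℂ) * θ z = (arg (z * c) - arg c : ℝ) := by
      push_cast [θ]
      field_simp
    rw [hπθ, norm_mul_exp_arg_mul_sub_arg hc0 z]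
  obtain ⟨z₁, hz₁, hmin⟩ := hcpt.exists_isMinOn hne hθ
  obtain ⟨z₂, hz₂, hmax⟩ := hcpt.exists_isMaxOn hne hθ
  refine ⟨θ z₁, θ z₂, hmin hz₂, ?_,
    setOf_pos_smul_eq_sector hconv.isPreconnected h0 hθ hpolar hz₁ hz₂ hmin hmax⟩
  rw [← sub_div, sub_sub_sub_cancel_right, div_lt_one Real.pi_pos]
  exact arg_sub_arg_lt_pi (hc z₂ hz₂) (hc z₁ hz₁)

end KacMoodyStab
end
end
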